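/- arXiv:2304.14793 — 2 statements merged into one kernel-verified Lean document; each statement's English description precedes it below -/
import Mathlib

section
/- Let H₁ = G/ρ₁ and H₂ = G/ρ₂ be two d-reducts of a colored multigraph G, and let f be an isomorphism from H₁ to H₂. Then f agrees with ρ₂ on the nodes of H₁: f(u) = ρ₂(u) for all u ∈ H₁. -/
open Classical

/-- The multiset of incoming neighbors of `v` in the multigraph with edge
multiplicity function `E` (with `E w v` the multiplicity of edge `w → v`). -/
def inc {V : Type*} [Fintype V] (E : V → V → ℕ) (v : V) : Multiset V :=
  Finset.univ.val.bind fun w => Multiset.replicate (E w v) w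

/-- Cap all multiplicities of a multiset at `c ∈ ℕ∞`. -/
noncomputable def capM {α : Type*} (c : ℕ∞) (M : Multiset α) : Multiset α :=
  letI := Classical.decEq α
  M.toFinset.val.bind fun x => Multiset.replicate ((min (M.count x : ℕ∞) c).toNat) x

/-- The type of colors obtained after `d` steps of color refinement, starting
from base colors in `Y`: a depth-`d` color is the previous color paired with the
multiset of previous colors of the incoming neighbors. -/
def CRt (Y : Type*) : ℕ → Type _
  | 0 => Y
  | (d+1) => CRt Y d × Multiset (CRt Y d)

/-- `d` steps of color refinement, starting from base coloring `g`. -/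
def colr {V : Type*} [Fintype V] {Y : Type*} (E : V → V → ℕ) (g : V → Y) :
    (d : ℕ) → V → CRt Y d
  | 0 => g
  | (d+1) => fun v => (colr E g d v, (inc E v).map (colr E g d))

/-- `d` steps of `c`-graded color refinement. -/
noncomputable def colrC {V : Type*} [Fintype V] {Y : Type*} (c : ℕ∞) (E : V → V → ℕ)
    (g : V → Y) : (d : ℕ) → V → CRt Y d
  | 0 => g
  | (d+1) => fun v => (colrC c E g d v, capM c ((inc E v).map (colrC c E g d)))

/-- The partition induced by `d` refinement steps is stable at `d`. -/
def stableAt {V : Type*} [Fintype V] {Y : Type*} (E : V → V → ℕ) (g : V → Y) (d : ℕ) : Prop :=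
  ∀ v w : V, colr E g d v = colr E g d w ↔ colr E g (d+1) v = colr E g (d+1) w

/-- The stable coloring number: least depth at which color refinement stabilizes. -/
noncomputable def stableNum {V : Type*} [Fintype V] {Y : Type*} (E : V → V → ℕ) (g : V → Y) : ℕ :=
  sInf { d | stableAt E g d }

/-- The stable coloring `colr^∞`. -/
noncomputable def colrInf {V : Type*} [Fintype V] {Y : Type*} (E : V → V → ℕ) (g : V → Y) :
    V → CRt Y (stableNum E g) :=
  colr E g (stableNum E g)

/-- The depth (number of refinement rounds) corresponding to `d ∈ ℕ∞`:
for `d = ∞` it is the stable coloring number of the graph. -/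
noncomputable def edepth {V : Type*} [Fintype V] {Y : Type*} (E : V → V → ℕ) (g : V → Y)
    (d : ℕ∞) : ℕ :=
  WithTop.untopD (stableNum E g) d

/-- Color refinement with depth `d ∈ ℕ∞` (stable coloring for `d = ∞`). -/
noncomputable def colrE' {V : Type*} [Fintype V] {Y : Type*} (E : V → V → ℕ) (g : V → Y)
    (d : ℕ∞) : V → CRt Y (edepth E g d) :=
  colr E g (edepth E g d)

/-- A substitution choosing one representative per class of the coloring `col`:
`ρ v` is in the class of `v`, and `ρ` is constant on classes. -/
def IsSubstWith {V : Type*} {C : Type*} (col : V → C) (ρ : V → V) : Prop :=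
  (∀ v, col (ρ v) = col v) ∧ ∀ v w, col v = col w → ρ v = ρ w

/-- Node set of the reduction: the chosen representatives. -/
def RNodes {V : Type*} (ρ : V → V) : Type _ := { v : V // ∃ u, ρ u = v }

noncomputable instance {V : Type*} [Fintype V] (ρ : V → V) : Fintype (RNodes ρ) := by
  unfold RNodes; exact Subtype.fintype _

instance {V : Type*} [DecidableEq V] (ρ : V → V) : DecidableEq (RNodes ρ) := by
  unfold RNodes; infer_instance

/-- Edge multiplicities of the reduction: `E'(v → w) = Σ_{v' ∈ [v]} E(v' → w)`. -/
noncomputable def reductE {V : Type*} [Fintype V] {C : Type*} (E : V → V → ℕ) (col : V → C)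
    (ρ : V → V) (a b : RNodes ρ) : ℕ :=
  ∑ v' ∈ Finset.univ.filter (fun v' => col v' = col a.val), E v' b.val

/-- Edge multiplicities of the `c`-graded reduction:
`E'(v → w) = min(Σ_{v' ∈ [v]} min(E(v' → w), c), c)`. -/
noncomputable def reductEC {V : Type*} [Fintype V] {C : Type*} (c : ℕ∞) (E : V → V → ℕ)
    (col : V → C) (ρ : V → V) (a b : RNodes ρ) : ℕ :=
  (min (↑(∑ v' ∈ Finset.univ.filter (fun v' => col v' = col a.val),
      (min (E v' b.val : ℕ∞) c).toNat) : ℕ∞) c).toNat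

/-- Coloring of the reduction: colors are inherited. -/
def reductG {V : Type*} {Y : Type*} (g : V → Y) (ρ : V → V) (a : RNodes ρ) : Y := g a.val

/-- A GNN layer of input dimension `p` and output dimension `q`. -/
structure GNNLayer (p q : ℕ) where
  h : ℕ
  agg : Multiset (Fin p → ℝ) → (Fin h → ℝ)
  comb : (Fin p → ℝ) → (Fin h → ℝ) → (Fin q → ℝ)

/-- The feature map transformer computed by a GNN layer. -/
def GNNLayer.apply {p q : ℕ} (L : GNNLayer p q) {V : Type*} [Fintype V]
    (E : V → V → ℕ) (g : V → Fin p → ℝ) : V → Fin q → ℝ :=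
  fun v => L.comb (g v) (L.agg ((inc E v).map g))

/-- A GNN: a nonempty sequence of layers with matching dimensions. -/
inductive GNN : ℕ → ℕ → Type
  | single : ∀ {p q}, GNNLayer p q → GNN p q
  | cons : ∀ {p r q}, GNNLayer p r → GNN r q → GNN p q

/-- Number of layers of a GNN. -/
def GNN.depth : ∀ {p q}, GNN p q → ℕ
  | _, _, .single _ => 1
  | _, _, .cons _ rest => rest.depth + 1

/-- The feature map transformer computed by a GNN. -/
def GNN.apply {V : Type*} [Fintype V] : ∀ {p q}, GNN p q → (V → V → ℕ) →
    (V → Fin p → ℝ) → V → Fin q → ℝ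
  | _, _, .single L, E, g => L.apply E g
  | _, _, .cons L rest, E, g => rest.apply E (L.apply E g)

/-- A GNN layer has width `c` if its aggregation only depends on multiplicities up to `c`. -/
def GNNLayer.HasWidth {p q : ℕ} (c : ℕ∞) (L : GNNLayer p q) : Prop :=
  ∀ M, L.agg M = L.agg (capM c M)

/-- A GNN has width `c` if all its layers do. -/
def GNN.HasWidth (c : ℕ∞) : ∀ {p q}, GNN p q → Prop
  | _, _, .single L => L.HasWidth c
  | _, _, .cons L rest => L.HasWidth c ∧ rest.HasWidth c

/-!
For `k ≤ d` a representative has the same depth-`k` color in `G/ρ` as in `G`: the in-neighbours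
of `a` in `G/ρ` are the images of its in-neighbours in `G` under `v ↦ ρ v`, and `colr^k` is
constant on depth-`d` classes. An isomorphism `f` preserves `colr^d`, so `f a` and `a` lie in
the same depth-`d` class of `G`; since `ρ₂` is constant on classes and fixes its representatives,
`f a = ρ₂ (f a) = ρ₂ a`.
-/

section Refinement

variable {V Y : Type*} [Fintype V]

theorem inc_eq_sum (E : V → V → ℕ) (v : V) :
    inc E v = ∑ w, Multiset.replicate (E w v) w :=
  rfl

theorem inc_eq_map_of_eq_sum_fiber {W : Type*} [Fintype W] [DecidableEq W] (E : V → V → ℕ)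
    (E' : W → W → ℕ) (π : V → W) (x : V) (a : W) (h : ∀ b, E' b a = ∑ v with π v = b, E v x) :
    inc E' a = (inc E x).map π := by
  calc inc E' a = ∑ b, ∑ v with π v = b, E v x • {b} := by
        simp only [inc_eq_sum, h, ← Multiset.nsmul_singleton, Finset.sum_smul]
    _ = ∑ v, E v x • {π v} := by
        rw [← Finset.sum_fiberwise Finset.univ π]
        refine Finset.sum_congr rfl fun b _ => Finset.sum_congr rfl fun v hv => ?_
        rw [(Finset.mem_filter.mp hv).2]
    _ = (inc E x).map π := by
        rw [inc_eq_sum, ← Multiset.coe_mapAddMonoidHom, map_sum]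
        simp only [Multiset.coe_mapAddMonoidHom, Multiset.map_replicate, Multiset.nsmul_singleton]

theorem inc_map_equiv {W : Type*} [Fintype W] (E : V → V → ℕ) (E' : W → W → ℕ) (f : V ≃ W)
    (hE : ∀ v w, E' (f v) (f w) = E v w) (v : V) :
    inc E' (f v) = (inc E v).map f := by
  refine inc_eq_map_of_eq_sum_fiber E E' f v (f v) fun b => ?_
  obtain ⟨u, rfl⟩ := f.surjective b
  simp [hE, Finset.sum_filter]

theorem colr_map_equiv {W : Type*} [Fintype W] (E : V → V → ℕ) (E' : W → W → ℕ) (g : V → Y)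
    (g' : W → Y) (f : V ≃ W) (hg : ∀ v, g' (f v) = g v) (hE : ∀ v w, E' (f v) (f w) = E v w) :
    ∀ (k : ℕ) (v : V), colr E' g' k (f v) = colr E g k v
  | 0, v => hg v
  | k + 1, v => by
    have ih := colr_map_equiv E E' g g' f hg hE k
    change (colr E' g' k (f v), (inc E' (f v)).map (colr E' g' k))
      = (colr E g k v, (inc E v).map (colr E g k))
    rw [ih, inc_map_equiv E E' f hE, Multiset.map_map]
    exact congrArg _ (Multiset.map_congr rfl fun u _ => ih u)

theorem colr_eq_of_colr_succ_eq {E : V → V → ℕ} {g : V → Y} {k : ℕ} {v w : V}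
    (h : colr E g (k + 1) v = colr E g (k + 1) w) : colr E g k v = colr E g k w :=
  congrArg Prod.fst h

end Refinement

def RNodes.proj {V : Type*} (ρ : V → V) (v : V) : RNodes ρ :=
  ⟨ρ v, v, rfl⟩

namespace IsSubstWith

variable {V C : Type*} {col : V → C} {ρ : V → V}

theorem apply_val (h : IsSubstWith col ρ) (b : RNodes ρ) : ρ b.val = b.val := by
  obtain ⟨b, u, rfl⟩ := b
  exact h.2 _ _ (h.1 u)

theorem proj_eq_iff (h : IsSubstWith col ρ) {v : V} {b : RNodes ρ} :
    RNodes.proj ρ v = b ↔ col v = col b.val := by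
  refine ⟨fun hv => ?_, fun hv => Subtype.ext ?_⟩
  · rw [← hv, RNodes.proj, h.1]
  · change ρ v = b.val
    rw [h.2 _ _ hv, h.apply_val]

theorem inc_reductE [Fintype V] (h : IsSubstWith col ρ) (E : V → V → ℕ) (a : RNodes ρ) :
    inc (reductE E col ρ) a = (inc E a.val).map (RNodes.proj ρ) :=
  inc_eq_map_of_eq_sum_fiber E _ _ a.val a fun b => by
    unfold reductE
    congr 1
    exact Finset.filter_congr fun v _ => h.proj_eq_iff.symm

theorem colr_reductE [Fintype V] {Y : Type*} (h : IsSubstWith col ρ) (E : V → V → ℕ)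
    (g : V → Y) :
    ∀ (k : ℕ), (∀ v w, col v = col w → colr E g k v = colr E g k w) →
      ∀ a : RNodes ρ, colr (reductE E col ρ) (reductG g ρ) k a = colr E g k a.val
  | 0, _, _ => rfl
  | k + 1, hk, a => by
    have ih := colr_reductE h E g k fun v w hvw => colr_eq_of_colr_succ_eq (hk v w hvw)
    change (colr (reductE E col ρ) (reductG g ρ) k a,
        (inc (reductE E col ρ) a).map (colr (reductE E col ρ) (reductG g ρ) k))
      = (colr E g k a.val, (inc E a.val).map (colr E g k))
    rw [ih, h.inc_reductE, Multiset.map_map]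
    refine congrArg _ (Multiset.map_congr rfl fun v _ => ?_)
    rw [Function.comp_apply, ih]
    exact colr_eq_of_colr_succ_eq (hk _ _ (h.1 v))

end IsSubstWith

theorem iso_agrees_with_subst_general {V Y : Type*} [Fintype V]
    (E : V → V → ℕ) (g : V → Y) (d : ℕ) (ρ₁ ρ₂ : V → V)
    (h1 : IsSubstWith (colr E g d) ρ₁) (h2 : IsSubstWith (colr E g d) ρ₂)
    (f : RNodes ρ₁ ≃ RNodes ρ₂)
    (hcol : ∀ a, g (f a).val = g a.val)
    (hedge : ∀ a b, reductE E (colr E g d) ρ₂ (f a) (f b) = reductE E (colr E g d) ρ₁ a b) :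
    ∀ a : RNodes ρ₁, (f a).val = ρ₂ a.val := by
  intro a
  have hsame : colr E g d (f a).val = colr E g d a.val := by
    rw [← h1.colr_reductE E g d (fun _ _ => id), ← h2.colr_reductE E g d (fun _ _ => id)]
    exact colr_map_equiv _ _ _ _ f hcol hedge d a
  calc (f a).val = ρ₂ (f a).val := (h2.apply_val (f a)).symm
    _ = ρ₂ a.val := h2.2 _ _ hsame

/-- an isomorphism between two `d`-reducts agrees with `ρ₂`. -/
theorem iso_agrees_with_subst {V Y : Type*} [Fintype V] [DecidableEq V]
    (E : V → V → ℕ) (g : V → Y) (d : ℕ) (ρ₁ ρ₂ : V → V)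
    (h1 : IsSubstWith (colr E g d) ρ₁) (h2 : IsSubstWith (colr E g d) ρ₂)
    (f : RNodes ρ₁ ≃ RNodes ρ₂)
    (hcol : ∀ a, g (f a).val = g a.val)
    (hedge : ∀ a b, reductE E (colr E g d) ρ₂ (f a) (f b) = reductE E (colr E g d) ρ₁ a b) :
    ∀ a : RNodes ρ₁, (f a).val = ρ₂ a.val :=
  iso_agrees_with_subst_general E g d ρ₁ ρ₂ h1 h2 f hcol hedge
end

section
/- Let P = (G, T, loss, S) be a learning problem where every GNN in S has at most d ∈ ℕ∞ layers, and let ρ be a d-substitution on G. Then for every GNN L ∈ S, Σ_{v ∈ T} loss(v, L(G)(v)) = Σ_{v ∈ T/ρ} (loss/ρ)(v, L(G/ρ)(v)); that is, P and P/ρ are equivalent learning problems. -/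
open Classical

/-!
A GNN with at most `d` layers computes at each node a function of the node's depth-`d` refined
color, in any graph. In the reduct `G/ρ` each class of in-neighbors is merged into its
representative with the summed multiplicity, so, as long as the class determines the colors of
depth `k`, a representative sees the same multiset of depth-`k` neighbor colors as in `G`; by
induction it keeps all its colors of depth `≤ d`. For `d = ∞` this uses that refinement stabilizes
on a finite graph, after which the stable color determines the colors of every depth. Hence
`L(G)(w) = L(G/ρ)(ρ w)`, and the total loss regroups along the classes of the training nodes.
-/

lemma Multiset.map_eq_map_of_map_eq {α β γ δ : Type*} {f₁ : α → γ} {f₂ : β → γ} {h₁ : α → δ}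
    {h₂ : β → δ} (H : ∀ a b, f₁ a = f₂ b → h₁ a = h₂ b) {M : Multiset α} {N : Multiset β}
    (hMN : M.map f₁ = N.map f₂) : M.map h₁ = N.map h₂ := by
  have hrel := Multiset.rel_map.1 (Multiset.rel_eq.2 hMN)
  exact Multiset.rel_eq.1 (Multiset.rel_map.2 (hrel.mono fun a _ b _ => H a b))

section ColorRefinement

variable {V W Y : Type*} [Fintype V] [Fintype W] {E₁ : V → V → ℕ} {E₂ : W → W → ℕ}
  {k : ℕ} {v₁ : V} {v₂ : W}

lemma colr_succ_eq_iff {g₁ : V → Y} {g₂ : W → Y} :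
    colr E₁ g₁ (k + 1) v₁ = colr E₂ g₂ (k + 1) v₂ ↔
      colr E₁ g₁ k v₁ = colr E₂ g₂ k v₂ ∧
        (inc E₁ v₁).map (colr E₁ g₁ k) = (inc E₂ v₂).map (colr E₂ g₂ k) :=
  Prod.ext_iff

lemma colr_eq_of_le {g₁ : V → Y} {g₂ : W → Y} {j : ℕ} (hjk : j ≤ k)
    (h : colr E₁ g₁ k v₁ = colr E₂ g₂ k v₂) : colr E₁ g₁ j v₁ = colr E₂ g₂ j v₂ := by
  induction hjk with
  | refl => exact h
  | step _ ih => exact ih (colr_succ_eq_iff.1 h).1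

lemma GNNLayer.colr_apply_eq {p r : ℕ} (L : GNNLayer p r) {g₁ : V → Fin p → ℝ}
    {g₂ : W → Fin p → ℝ} (h : colr E₁ g₁ (k + 1) v₁ = colr E₂ g₂ (k + 1) v₂) :
    colr E₁ (L.apply E₁ g₁) k v₁ = colr E₂ (L.apply E₂ g₂) k v₂ := by
  induction k generalizing v₁ v₂ with
  | zero =>
    obtain ⟨hg, hinc⟩ := colr_succ_eq_iff.1 h
    exact congrArg₂ (fun x M => L.comb x (L.agg M)) hg hinc
  | succ k ih =>
    obtain ⟨hk, hinc⟩ := colr_succ_eq_iff.1 h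
    exact colr_succ_eq_iff.2 ⟨ih hk, Multiset.map_eq_map_of_map_eq (fun _ _ => ih) hinc⟩

lemma GNN.apply_eq_of_colr_eq {p q : ℕ} (L : GNN p q) {g₁ : V → Fin p → ℝ}
    {g₂ : W → Fin p → ℝ} (h : colr E₁ g₁ L.depth v₁ = colr E₂ g₂ L.depth v₂) :
    L.apply E₁ g₁ v₁ = L.apply E₂ g₂ v₂ := by
  induction L with
  | single L => exact L.colr_apply_eq (k := 0) h
  | cons L rest ih => exact ih (L.colr_apply_eq h)

end ColorRefinement

section Stability

variable {V Y : Type*} [Fintype V] {E : V → V → ℕ} {g : V → Y} {m : ℕ}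

lemma stableAt.succ (h : stableAt E g m) : stableAt E g (m + 1) := fun _ _ =>
  ⟨fun hvw => colr_succ_eq_iff.2
    ⟨hvw, Multiset.map_eq_map_of_map_eq (fun a b => (h a b).1) (colr_succ_eq_iff.1 hvw).2⟩,
  fun hvw => (colr_succ_eq_iff.1 hvw).1⟩

lemma stableAt.mono {n : ℕ} (h : stableAt E g m) (hmn : m ≤ n) : stableAt E g n := by
  induction n, hmn using Nat.le_induction with
  | base => exact h
  | succ n _ ih => exact ih.succ

lemma stableAt.colr_eq (h : stableAt E g m) {v w : V} (hvw : colr E g m v = colr E g m w)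
    (k : ℕ) : colr E g k v = colr E g k w := by
  rcases le_total k m with hkm | hmk
  · exact colr_eq_of_le hkm hvw
  · induction k, hmk using Nat.le_induction with
    | base => exact hvw
    | succ k hmk ih => exact ((h.mono hmk) v w).1 ih

lemma exists_stableAt (E : V → V → ℕ) (g : V → Y) : ∃ m, stableAt E g m := by
  let ker : ℕ →o (Set (V × V))ᵒᵈ :=
    ⟨fun k => OrderDual.toDual {x | colr E g k x.1 = colr E g k x.2},
      fun _ _ hjk _ hx => colr_eq_of_le hjk hx⟩
  obtain ⟨m, hm⟩ := WellFoundedGT.monotone_chain_condition ker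
  exact ⟨m, fun v w => Set.ext_iff.1 (hm (m + 1) m.le_succ) (v, w)⟩

lemma stableAt_stableNum (E : V → V → ℕ) (g : V → Y) : stableAt E g (stableNum E g) :=
  Nat.sInf_mem (exists_stableAt E g)

lemma colr_eq_of_colrE'_eq {d : ℕ∞} {k : ℕ} (hk : (k : ℕ∞) ≤ d) {v w : V}
    (h : colrE' E g d v = colrE' E g d w) : colr E g k v = colr E g k w := by
  cases d with
  | top => exact (stableAt_stableNum E g).colr_eq h k
  | coe n => exact colr_eq_of_le (by exact_mod_cast hk) h

end Stability

section Reduct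

variable {V C : Type*} {col : V → C} {ρ : V → V}

lemma IsSubstWith.mk_eq_iff (hρ : IsSubstWith col ρ) (b : RNodes ρ) (u : V) :
    (⟨ρ u, u, rfl⟩ : RNodes ρ) = b ↔ col u = col b.val := by
  obtain ⟨_, w, rfl⟩ := b
  rw [Subtype.mk.injEq, hρ.1 w]
  exact ⟨fun h => (hρ.1 u).symm.trans (h ▸ hρ.1 w), hρ.2 u w⟩

lemma IsSubstWith.sum_fiberwise {M : Type*} [AddCommMonoid M] [DecidableEq V]
    (hρ : IsSubstWith col ρ) (T : Finset V) (f : V → M) :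
    ∑ v ∈ T.attach.image (fun w => (⟨ρ w.val, w.val, rfl⟩ : RNodes ρ)),
      ∑ w ∈ T.filter (fun w => col w = col v.val), f w = ∑ w ∈ T, f w := by
  rw [← Finset.sum_fiberwise_of_maps_to (g := fun u => (⟨ρ u, u, rfl⟩ : RNodes ρ))
    (t := T.attach.image fun w => ⟨ρ w.val, w.val, rfl⟩)
    fun u hu => Finset.mem_image.2 ⟨⟨u, hu⟩, Finset.mem_attach _ _, rfl⟩]
  refine Finset.sum_congr rfl fun v _ => Finset.sum_congr ?_ fun _ _ => rfl
  exact Finset.filter_congr fun u _ => (hρ.mk_eq_iff v u).symm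

variable [Fintype V]

lemma map_inc_eq_sum (E : V → V → ℕ) (v : V) {β : Type*} (h : V → β) :
    (inc E v).map h = ∑ u, Multiset.replicate (E u v) (h u) := by
  simp only [inc, Multiset.map_bind, Multiset.map_replicate]
  rfl

lemma IsSubstWith.map_inc_reductE (hρ : IsSubstWith col ρ) (E : V → V → ℕ) {β : Type*}
    {h : V → β} (hh : ∀ u w, col u = col w → h u = h w) (a : RNodes ρ) :
    (inc (reductE E col ρ) a).map (fun b => h b.val) = (inc E a.val).map h := by
  rw [map_inc_eq_sum, map_inc_eq_sum, ← Finset.sum_fiberwise Finset.univ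
    (fun u => (⟨ρ u, u, rfl⟩ : RNodes ρ))]
  refine Finset.sum_congr rfl fun b _ => ?_
  rw [reductE, ← Multiset.nsmul_singleton, Finset.sum_smul]
  refine Finset.sum_congr ?_ fun u hu => ?_
  · ext u
    simp only [Finset.mem_filter, Finset.mem_univ, true_and, hρ.mk_eq_iff]
  · simp only [Finset.mem_filter, hρ.mk_eq_iff] at hu
    rw [Multiset.nsmul_singleton, hh u b.val hu.2]

lemma IsSubstWith.colr_reductE_s16 (hρ : IsSubstWith col ρ) {E : V → V → ℕ} {Y : Type*}
    {g : V → Y} {K : ℕ} (hcol : ∀ k ≤ K, ∀ v w, col v = col w → colr E g k v = colr E g k w) :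
    ∀ k ≤ K, ∀ a, colr (reductE E col ρ) (reductG g ρ) k a = colr E g k a.val := by
  intro k
  induction k with
  | zero => exact fun _ _ => rfl
  | succ k ih =>
    intro hk a
    have ih' := ih (Nat.le_of_succ_le hk)
    refine colr_succ_eq_iff.2 ⟨ih' a, ?_⟩
    rw [Multiset.map_congr rfl fun b _ => ih' b]
    exact hρ.map_inc_reductE E (hcol k (Nat.le_of_succ_le hk)) a

end Reduct

/-- compressing a learning problem by a `d`-substitution yields an
equivalent learning problem: every GNN of at most `d` layers has the same total
loss on the original and the compressed problem. -/
theorem compressed_problem_equiv {V : Type*} [Fintype V] [DecidableEq V] {p q : ℕ}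
    (E : V → V → ℕ) (g : V → Fin p → ℝ) (T : Finset V)
    (loss : V → (Fin q → ℝ) → ℝ) (d : ℕ∞) (ρ : V → V)
    (hρ : IsSubstWith (colrE' E g d) ρ) (L : GNN p q) (hL : (L.depth : ℕ∞) ≤ d) :
    ∑ v ∈ T, loss v (L.apply E g v) =
      ∑ v ∈ T.attach.image (fun w => (⟨ρ w.val, w.val, rfl⟩ : RNodes ρ)),
        ∑ w ∈ T.filter (fun w => colrE' E g d w = colrE' E g d v.val),
          loss w (L.apply (reductE E (colrE' E g d) ρ) (reductG g ρ) v) := by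
  have hcol : ∀ k ≤ L.depth, ∀ v w, colrE' E g d v = colrE' E g d w →
      colr E g k v = colr E g k w :=
    fun k hk _ _ => colr_eq_of_colrE'_eq ((Nat.cast_le.2 hk).trans hL)
  have happly (w : V) :
      L.apply (reductE E (colrE' E g d) ρ) (reductG g ρ) ⟨ρ w, w, rfl⟩ = L.apply E g w :=
    L.apply_eq_of_colr_eq <|
      (hρ.colr_reductE_s16 hcol _ le_rfl _).trans (hcol _ le_rfl _ _ (hρ.1 w))
  rw [← hρ.sum_fiberwise T]
  refine Finset.sum_congr rfl fun v _ => Finset.sum_congr rfl fun w hw => ?_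
  rw [← (hρ.mk_eq_iff v w).2 (Finset.mem_filter.1 hw).2, happly]
end
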